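/- If for every ū ∈ ℝ the limit A(ū) = lim_{ε→0⁺} (1/ε)·g(ε²|ū|) exists uniformly for ū in compact sets, then the identity map from (H(1), d) to (H(1), ρ) is metrically differentiable at every point, with metric differential ν(x, x̄) = max{‖x‖, A(x̄)}. -/
import Mathlib


/-- The Heisenberg group H(1) as a set: ℝ² × ℝ. -/
abbrev H : Type := (ℝ × ℝ) × ℝ

/-- Euclidean norm on ℝ². -/
noncomputable def enorm2 (x : ℝ × ℝ) : ℝ := Real.sqrt (x.1 ^ 2 + x.2 ^ 2)

/-- Canonical symplectic form on ℝ². -/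
def omega2 (x y : ℝ × ℝ) : ℝ := x.1 * y.2 - x.2 * y.1

/-- Heisenberg group operation. -/
def Hmul (p q : H) : H :=
  ((p.1.1 + q.1.1, p.1.2 + q.1.2), p.2 + q.2 + 2 * omega2 p.1 q.1)

/-- Heisenberg group inverse. -/
def Hinv (p : H) : H := ((-p.1.1, -p.1.2), -p.2)

/-- Neutral element. -/
def He : H := ((0, 0), 0)

/-- The gauge d₀(x,x̄) = max {‖x‖, √|x̄|}. -/
noncomputable def d0 (p : H) : ℝ := max (enorm2 p.1) (Real.sqrt |p.2|)
/-- The function G(t) = k(t) + t², whose inverse is g. -/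
def Ginv (k : ℝ → ℝ) (t : ℝ) : ℝ := k t + t ^ 2

/-- The gauge ρ₀(x,x̄) = max {‖x‖, g(|x̄|)}. -/
noncomputable def rho0 (g : ℝ → ℝ) (p : H) : ℝ := max (enorm2 p.1) (g |p.2|)

/-- The dilatations δ̄_ε(x,x̄) = (εx, sgn(x̄)·g⁻¹(ε·g(|x̄|))). -/
noncomputable def bdil (k g : ℝ → ℝ) (ε : ℝ) (p : H) : H :=
  ((ε * p.1.1, ε * p.1.2), Real.sign p.2 * Ginv k (ε * g |p.2|))

/-- The usual anisotropic dilations δ_ε(x,x̄) = (εx, ε²x̄). -/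
def hdil (ε : ℝ) (p : H) : H := ((ε * p.1.1, ε * p.1.2), ε ^ 2 * p.2)

/- ## Auxiliary lemmas -/

theorem enorm2_nonneg' (x : ℝ × ℝ) : 0 ≤ enorm2 x := Real.sqrt_nonneg _

theorem enorm2_smul' (ε : ℝ) (hε : 0 ≤ ε) (x : ℝ × ℝ) :
    enorm2 (ε * x.1, ε * x.2) = ε * enorm2 x := by
  unfold enorm2
  rw [show (ε * x.1) ^ 2 + (ε * x.2) ^ 2 = ε ^ 2 * (x.1 ^ 2 + x.2 ^ 2) by ring,
    Real.sqrt_mul (sq_nonneg ε), Real.sqrt_sq hε]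

theorem enorm2_sq' (x : ℝ × ℝ) : enorm2 x ^ 2 = x.1 ^ 2 + x.2 ^ 2 :=
  Real.sq_sqrt (by positivity)

theorem enorm2_add_le' (x y : ℝ × ℝ) :
    enorm2 (x.1 + y.1, x.2 + y.2) ≤ enorm2 x + enorm2 y := by
  have hx := enorm2_nonneg' x
  have hy := enorm2_nonneg' y
  have hx2 := enorm2_sq' x
  have hy2 := enorm2_sq' y
  rw [show enorm2 x + enorm2 y = Real.sqrt ((enorm2 x + enorm2 y) ^ 2) from
    (Real.sqrt_sq (by positivity)).symm]
  apply Real.sqrt_le_sqrt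
  show (x.1 + y.1) ^ 2 + (x.2 + y.2) ^ 2 ≤ (enorm2 x + enorm2 y) ^ 2
  nlinarith [sq_nonneg (x.1 * y.2 - x.2 * y.1),
    sq_nonneg (enorm2 x * enorm2 y - (x.1 * y.1 + x.2 * y.2)), mul_nonneg hx hy]

theorem cauchy2' (x y : ℝ × ℝ) : |x.1 * y.2 - x.2 * y.1| ≤ enorm2 x * enorm2 y := by
  have hx := enorm2_nonneg' x
  have hy := enorm2_nonneg' y
  have hx2 := enorm2_sq' x
  have hy2 := enorm2_sq' y
  rw [← Real.sqrt_sq_eq_abs,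
    show enorm2 x * enorm2 y = Real.sqrt ((enorm2 x * enorm2 y) ^ 2) from
      (Real.sqrt_sq (by positivity)).symm]
  apply Real.sqrt_le_sqrt
  nlinarith [sq_nonneg (x.1 * y.1 + x.2 * y.2)]

/-- The pointwise limit property. -/
def LimAt (g A : ℝ → ℝ) (u : ℝ) : Prop :=
  ∀ η : ℝ, 0 < η → ∃ ε₀ : ℝ, 0 < ε₀ ∧ ∀ ε : ℝ, 0 < ε → ε < ε₀ →
    |(1 / ε) * g (ε ^ 2 * |u|) - A u| < η

theorem limAt_eq_abs (g A : ℝ → ℝ) (u : ℝ) (h1 : LimAt g A u) (h2 : LimAt g A (|u|)) :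
    A u = A (|u|) := by
  have key : ∀ η : ℝ, 0 < η → |A u - A (|u|)| < 2 * η := by
    intro η hη
    obtain ⟨ε₁, hε₁, H1⟩ := h1 η hη
    obtain ⟨ε₂, hε₂, H2⟩ := h2 η hη
    set ε := min ε₁ ε₂ / 2 with hεdef
    have hε : 0 < ε := by positivity
    have l1 : ε < ε₁ := by
      have := min_le_left ε₁ ε₂; simp only [hεdef]; linarith [lt_min hε₁ hε₂]
    have l2 : ε < ε₂ := by
      have := min_le_right ε₁ ε₂; simp only [hεdef]; linarith [lt_min hε₁ hε₂]
    have a1 := H1 ε hε l1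
    have a2 := H2 ε hε l2
    rw [abs_abs] at a2
    calc |A u - A (|u|)|
        ≤ |(1 / ε) * g (ε ^ 2 * |u|) - A u| + |(1 / ε) * g (ε ^ 2 * |u|) - A (|u|)| := by
          rw [abs_sub_comm ((1 / ε) * g (ε ^ 2 * |u|)) (A u)]; exact abs_sub_le _ _ _
      _ < 2 * η := by linarith
  by_contra hne
  have h0 : 0 < |A u - A (|u|)| := abs_pos.mpr (sub_ne_zero.mpr hne)
  have := key (|A u - A (|u|)| / 2) (by linarith)
  linarith

theorem limAt_hom (g A : ℝ → ℝ) (u t : ℝ) (ht : 0 < t)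
    (h1 : LimAt g A u) (h2 : LimAt g A (t ^ 2 * u)) :
    A (t ^ 2 * u) = t * A u := by
  have key : ∀ η : ℝ, 0 < η → |A (t ^ 2 * u) - t * A u| < (1 + t) * η := by
    intro η hη
    obtain ⟨ε₁, hε₁, H1⟩ := h1 η hη
    obtain ⟨ε₂, hε₂, H2⟩ := h2 η hη
    set ε := min ε₂ (ε₁ / t) / 2 with hεdef
    have hε : 0 < ε := by positivity
    have l2 : ε < ε₂ := by
      have h := lt_min hε₂ (div_pos hε₁ ht)
      have := min_le_left ε₂ (ε₁ / t); simp only [hεdef]; linarith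
    have l1 : ε * t < ε₁ := by
      have hle : ε ≤ ε₁ / t / 2 := by
        have := min_le_right ε₂ (ε₁ / t); simp only [hεdef]; linarith
      have h3 : ε₁ / t * t = ε₁ := div_mul_cancel₀ ε₁ (ne_of_gt ht)
      nlinarith
    have a2 := H2 ε hε l2
    have a1 := H1 (ε * t) (by positivity) l1
    have habs : |t ^ 2 * u| = t ^ 2 * |u| := by
      rw [abs_mul, abs_of_nonneg (sq_nonneg t)]
    rw [habs] at a2
    have hF : (1 / ε) * g (ε ^ 2 * (t ^ 2 * |u|)) =
        t * ((1 / (ε * t)) * g ((ε * t) ^ 2 * |u|)) := by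
      have h1' : ε ^ 2 * (t ^ 2 * |u|) = (ε * t) ^ 2 * |u| := by ring
      rw [h1']
      field_simp
    set G := (1 / (ε * t)) * g ((ε * t) ^ 2 * |u|) with hG
    have a2' : |t * G - A (t ^ 2 * u)| < η := by rw [← hF]; exact a2
    have a1' : |t * G - t * A u| < t * η := by
      rw [show t * G - t * A u = t * (G - A u) by ring, abs_mul, abs_of_pos ht]
      exact (mul_lt_mul_iff_right₀ ht).mpr a1
    calc |A (t ^ 2 * u) - t * A u|
        ≤ |A (t ^ 2 * u) - t * G| + |t * G - t * A u| := abs_sub_le _ _ _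
      _ < (1 + t) * η := by rw [abs_sub_comm] at a2'; linarith
  by_contra hne
  have h0 : 0 < |A (t ^ 2 * u) - t * A u| := abs_pos.mpr (sub_ne_zero.mpr hne)
  have := key (|A (t ^ 2 * u) - t * A u| / (2 * (1 + t))) (by positivity)
  have hh : (1 + t) * (|A (t ^ 2 * u) - t * A u| / (2 * (1 + t)))
      = |A (t ^ 2 * u) - t * A u| / 2 := by field_simp
  rw [hh] at this; linarith

theorem limAt_bounds (g A : ℝ → ℝ)
    (hgnn : ∀ t : ℝ, 0 ≤ t → 0 ≤ g t) (hgle : ∀ t : ℝ, 0 ≤ t → g t ≤ Real.sqrt t)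
    (u : ℝ) (h : LimAt g A u) : 0 ≤ A u ∧ A u ≤ Real.sqrt |u| := by
  have hpt : ∀ ε : ℝ, 0 < ε →
      0 ≤ (1 / ε) * g (ε ^ 2 * |u|) ∧ (1 / ε) * g (ε ^ 2 * |u|) ≤ Real.sqrt |u| := by
    intro ε hε
    have h0 : (0:ℝ) ≤ ε ^ 2 * |u| := by positivity
    constructor
    · exact mul_nonneg (by positivity) (hgnn _ h0)
    · have h1 : g (ε ^ 2 * |u|) ≤ Real.sqrt (ε ^ 2 * |u|) := hgle _ h0
      have h2 : Real.sqrt (ε ^ 2 * |u|) = ε * Real.sqrt |u| := by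
        rw [Real.sqrt_mul (sq_nonneg ε), Real.sqrt_sq hε.le]
      calc (1 / ε) * g (ε ^ 2 * |u|) ≤ (1 / ε) * (ε * Real.sqrt |u|) := by
            rw [← h2]; exact mul_le_mul_of_nonneg_left h1 (by positivity)
        _ = Real.sqrt |u| := by field_simp
  constructor
  · rw [← neg_neg (A u), ← neg_zero, neg_le_neg_iff]
    apply le_of_forall_pos_le_add
    intro η hη
    obtain ⟨ε₀, hε₀, H⟩ := h η hη
    have hp := hpt (ε₀ / 2) (by positivity)
    have := H (ε₀ / 2) (by positivity) (by linarith)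
    rw [abs_lt] at this
    linarith [hp.1]
  · apply le_of_forall_pos_le_add
    intro η hη
    obtain ⟨ε₀, hε₀, H⟩ := h η hη
    have hp := hpt (ε₀ / 2) (by positivity)
    have := H (ε₀ / 2) (by positivity) (by linarith)
    rw [abs_lt] at this
    linarith [hp.2]

theorem limAt_zero (g A : ℝ → ℝ) (hg0 : g 0 = 0) (h : LimAt g A 0) : A 0 = 0 := by
  have key : ∀ η : ℝ, 0 < η → |A 0| < η := by
    intro η hη
    obtain ⟨ε₀, hε₀, H⟩ := h η hη
    have := H (ε₀ / 2) (by positivity) (by linarith)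
    simpa [hg0] using this
  by_contra hne
  have := key |A 0| (abs_pos.mpr hne)
  linarith

theorem metric_differentiability_of_id
(k g : ℝ → ℝ)
    (hk_conv : ConvexOn ℝ (Set.Ici 0) k)
    (hk_mono : StrictMonoOn k (Set.Ici 0))
    (hk_cont : ContinuousOn k (Set.Ici 0))
    (hk0 : k 0 = 0)
    (hk_nonneg : ∀ t ∈ Set.Ici (0:ℝ), 0 ≤ k t)
    (hg_left : ∀ s ∈ Set.Ici (0:ℝ), g (Ginv k s) = s)
    (hg_right : ∀ t ∈ Set.Ici (0:ℝ), 0 ≤ g t ∧ Ginv k (g t) = t)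
    (A : ℝ → ℝ)
    (hA : ∀ C : Set ℝ, IsCompact C → ∀ η : ℝ, 0 < η → ∃ ε₀ : ℝ, 0 < ε₀ ∧
      ∀ ε : ℝ, 0 < ε → ε < ε₀ → ∀ u ∈ C, |(1 / ε) * g (ε ^ 2 * |u|) - A u| < η) :
    ∀ x : H,
      (∀ ε : ℝ, 0 < ε → ∀ v : H,
        max (enorm2 (hdil ε v).1) (A (hdil ε v).2) = ε * max (enorm2 v.1) (A v.2)) ∧
      (∀ v w : H,
        max (enorm2 (Hmul v w).1) (A (Hmul v w).2)
          ≤ max (enorm2 v.1) (A v.2) + max (enorm2 w.1) (A w.2)) ∧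
      (∀ K : Set H, IsCompact K → ∀ τ : ℝ, 0 < τ → ∃ ε₀ : ℝ, 0 < ε₀ ∧
        ∀ ε : ℝ, 0 < ε → ε < ε₀ → ∀ v ∈ K,
          |(1 / ε) * rho0 g (Hmul (Hinv x) (Hmul x (hdil ε v)))
            - max (enorm2 v.1) (A v.2)| < τ) := by
  -- basic facts about g
  have hgnn : ∀ t : ℝ, 0 ≤ t → 0 ≤ g t := fun t ht => (hg_right t ht).1
  have hgle : ∀ t : ℝ, 0 ≤ t → g t ≤ Real.sqrt t := by
    intro t ht
    have h1 := hg_right t ht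
    have hk := hk_nonneg (g t) h1.1
    have hsq : (g t) ^ 2 ≤ t := by
      have := h1.2; unfold Ginv at this; linarith
    exact (Real.le_sqrt h1.1 (by linarith [sq_nonneg (g t)])).mpr hsq
  have hg0 : g 0 = 0 := by
    have h1 := hg_right 0 Set.self_mem_Ici
    have hk := hk_nonneg (g 0) h1.1
    have := h1.2; unfold Ginv at this
    nlinarith [h1.1]
  -- pointwise limits
  have hlim : ∀ u : ℝ, LimAt g A u := by
    intro u η hη
    obtain ⟨ε₀, hε₀, H⟩ := hA {u} isCompact_singleton η hη
    exact ⟨ε₀, hε₀, fun ε hε hε' => H ε hε hε' u rfl⟩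
  -- structure of A
  have hA1nn : 0 ≤ A 1 := (limAt_bounds g A hgnn hgle 1 (hlim 1)).1
  have hA1le : A 1 ≤ 1 := by
    have := (limAt_bounds g A hgnn hgle 1 (hlim 1)).2
    simpa using this
  have hAform : ∀ u : ℝ, A u = A 1 * Real.sqrt |u| := by
    intro u
    rcases eq_or_ne u 0 with rfl | hu
    · rw [limAt_zero g A hg0 (hlim 0)]
      simp
    · have habs : 0 < |u| := abs_pos.mpr hu
      have ht : 0 < Real.sqrt |u| := Real.sqrt_pos.mpr habs
      have hsq : Real.sqrt |u| ^ 2 * 1 = |u| := by rw [Real.sq_sqrt habs.le]; ring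
      calc A u = A (|u|) := limAt_eq_abs g A u (hlim u) (hlim (|u|))
        _ = A (Real.sqrt |u| ^ 2 * 1) := by rw [hsq]
        _ = Real.sqrt |u| * A 1 := limAt_hom g A 1 (Real.sqrt |u|) ht (hlim 1) (by rw [hsq]; exact hlim (|u|))
        _ = A 1 * Real.sqrt |u| := mul_comm _ _
  have hAhom : ∀ u ε : ℝ, 0 < ε → A (ε ^ 2 * u) = ε * A u := fun u ε hε =>
    limAt_hom g A u ε hε (hlim u) (hlim (ε ^ 2 * u))
  intro x
  refine ⟨?_, ?_, ?_⟩
  · -- homogeneity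
    intro ε hε v
    simp only [hdil]
    rw [enorm2_smul' ε hε.le v.1, hAhom v.2 ε hε, mul_max_of_nonneg _ _ hε.le]
  · -- subadditivity
    intro v w
    simp only [Hmul, omega2]
    set c := A 1 with hc
    set nv := enorm2 v.1 with hnv
    set nw := enorm2 w.1 with hnw
    set a := max nv (A v.2) with ha
    set b := max nw (A w.2) with hb
    have ha0 : 0 ≤ a := le_trans (enorm2_nonneg' v.1) (le_max_left _ _)
    have hb0 : 0 ≤ b := le_trans (enorm2_nonneg' w.1) (le_max_left _ _)
    apply max_le
    · calc enorm2 (v.1.1 + w.1.1, v.1.2 + w.1.2) ≤ nv + nw := enorm2_add_le' v.1 w.1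
        _ ≤ a + b := add_le_add (le_max_left _ _) (le_max_left _ _)
    · rw [hAform]
      have hz : |v.2 + w.2 + 2 * (v.1.1 * w.1.2 - v.1.2 * w.1.1)|
          ≤ |v.2| + |w.2| + 2 * (nv * nw) := by
        have h1 := abs_add_le (v.2 + w.2) (2 * (v.1.1 * w.1.2 - v.1.2 * w.1.1))
        have h2 := abs_add_le v.2 w.2
        have h3 : |2 * (v.1.1 * w.1.2 - v.1.2 * w.1.1)| ≤ 2 * (nv * nw) := by
          rw [abs_mul, abs_two]
          exact mul_le_mul_of_nonneg_left (cauchy2' v.1 w.1) (by norm_num)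
        linarith
      have hcv : c * Real.sqrt |v.2| ≤ a := by
        rw [← hAform]; exact le_max_right _ _
      have hcw : c * Real.sqrt |w.2| ≤ b := by
        rw [← hAform]; exact le_max_right _ _
      have hcv2 : c ^ 2 * |v.2| ≤ a ^ 2 := by
        have h := mul_self_le_mul_self (by positivity : 0 ≤ c * Real.sqrt |v.2|) hcv
        nlinarith [Real.sq_sqrt (abs_nonneg v.2)]
      have hcw2 : c ^ 2 * |w.2| ≤ b ^ 2 := by
        have h := mul_self_le_mul_self (by positivity : 0 ≤ c * Real.sqrt |w.2|) hcw
        nlinarith [Real.sq_sqrt (abs_nonneg w.2)]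
      have hva : nv ≤ a := le_max_left _ _
      have hwb : nw ≤ b := le_max_left _ _
      have hnv0 : 0 ≤ nv := enorm2_nonneg' v.1
      have hnw0 : 0 ≤ nw := enorm2_nonneg' w.1
      have key : c ^ 2 * |v.2 + w.2 + 2 * (v.1.1 * w.1.2 - v.1.2 * w.1.1)| ≤ (a + b) ^ 2 := by
        have hzc := mul_le_mul_of_nonneg_left hz (sq_nonneg c)
        have hc2 : c ^ 2 ≤ 1 := by nlinarith
        have hnn : nv * nw ≤ a * b := mul_le_mul hva hwb hnw0 ha0
        nlinarith [hzc, hc2, hnn, mul_nonneg hnv0 hnw0]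
      calc c * Real.sqrt |v.2 + w.2 + 2 * (v.1.1 * w.1.2 - v.1.2 * w.1.1)|
          = Real.sqrt (c ^ 2 * |v.2 + w.2 + 2 * (v.1.1 * w.1.2 - v.1.2 * w.1.1)|) := by
            rw [Real.sqrt_mul (sq_nonneg c), Real.sqrt_sq hA1nn]
        _ ≤ Real.sqrt ((a + b) ^ 2) := Real.sqrt_le_sqrt key
        _ = a + b := Real.sqrt_sq (by linarith)
  · -- the limit
    intro K hK τ hτ
    obtain ⟨ε₀, hε₀, H⟩ := hA (Prod.snd '' K) (hK.image continuous_snd) τ hτ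
    refine ⟨ε₀, hε₀, fun ε hε hε' v hv => ?_⟩
    have hsimp : Hmul (Hinv x) (Hmul x (hdil ε v)) = hdil ε v := by
      simp only [Hmul, Hinv, omega2, hdil, Prod.mk.injEq]
      refine ⟨⟨by ring, by ring⟩, by ring⟩
    rw [hsimp]
    have hrho : rho0 g (hdil ε v) = max (ε * enorm2 v.1) (g (ε ^ 2 * |v.2|)) := by
      unfold rho0 hdil
      rw [show ((ε * v.1.1, ε * v.1.2), ε ^ 2 * v.2).1 = (ε * v.1.1, ε * v.1.2) from rfl,
        show ((ε * v.1.1, ε * v.1.2), ε ^ 2 * v.2).2 = ε ^ 2 * v.2 from rfl,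
        enorm2_smul' ε hε.le v.1, abs_mul, abs_of_nonneg (sq_nonneg ε)]
    rw [hrho, mul_max_of_nonneg _ _ (by positivity : (0:ℝ) ≤ 1 / ε),
      show (1 / ε) * (ε * enorm2 v.1) = enorm2 v.1 by field_simp]
    rw [max_comm (enorm2 v.1) ((1 / ε) * g (ε ^ 2 * |v.2|)),
      max_comm (enorm2 v.1) (A v.2)]
    calc |max ((1 / ε) * g (ε ^ 2 * |v.2|)) (enorm2 v.1) - max (A v.2) (enorm2 v.1)|
        ≤ |(1 / ε) * g (ε ^ 2 * |v.2|) - A v.2| := abs_max_sub_max_le_abs _ _ _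
      _ < τ := H ε hε hε' v.2 ⟨v, hv, rfl⟩
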